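/- Suppose an online learning procedure produces iterates θ^(1), …, θ^(T) with T = εn, and at each step t the point z^(t) ∈ F maximizes ℓ(θ^(t-1); ·) over F. Let D_p = {z^(1), …, z^(T)}, let θ̃ minimize L(θ; D_c ∪ D_p) over Θ, and let U* = min_{1≤t≤T} U(θ^(t)), where U(θ) = (1/n)L(θ;D_c) + ε·max_{z∈F} ℓ(θ;z). Then (1/n) L(θ̃; D_c ∪ D_p) ≤ M ≤ U*, where M = max_{D_p' ⊆ F, |D_p'|=εn} min_{θ∈Θ} (1/n) L(θ; D_c ∪ D_p'). -/

import Mathlib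

lemma cont_msum {Θ Z : Type*} [TopologicalSpace Θ] (ℓ : Θ → Z → ℝ)
    (hcont : ∀ z, Continuous fun θ => ℓ θ z) (m : Multiset Z) :
    Continuous fun θ => ((m.map (ℓ θ)).sum) := by
  induction m using Multiset.induction_on with
  | empty => simpa using continuous_const
  | cons a s ih => simpa [Multiset.map_cons, Multiset.sum_cons] using (show Continuous fun θ => ℓ θ a + (s.map (ℓ θ)).sum from (hcont a).add ih)

/-- Proposition 1, first part: the candidate attack from the online iterates gives a lower
bound on the minimax loss `M`, and `U* = min_t U(θ^(t))` gives an upper bound. -/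
theorem prop1_sandwich
    {Θ Z : Type*} [TopologicalSpace Θ] [CompactSpace Θ] [Nonempty Θ]
    (ℓ : Θ → Z → ℝ) (hcont : ∀ z, Continuous fun θ => ℓ θ z)
    (F : Set Z) (hF : F.Nonempty)
    (hmax : ∀ θ : Θ, ∃ z0 ∈ F, ∀ z ∈ F, ℓ θ z ≤ ℓ θ z0)
    (Dc : Multiset Z) (n : ℕ) (hn : Dc.card = n) (hn0 : 0 < n)
    (ε : ℝ) (hε : 0 < ε) (T : ℕ) (hT : 0 < T) (hTn : (T : ℝ) = ε * n)
    (θseq : ℕ → Θ) (zseq : ℕ → Z)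
    (hz : ∀ t ∈ Finset.Icc 1 T, zseq t ∈ F ∧ ∀ z ∈ F, ℓ (θseq (t - 1)) z ≤ ℓ (θseq (t - 1)) (zseq t))
    (Dp : Multiset Z) (hDp : Dp = ((Finset.Icc 1 T).val).map zseq)
    (θtil : Θ)
    (hθtil : ∀ θ' : Θ, (((Dc + Dp).map (ℓ θtil)).sum) ≤ (((Dc + Dp).map (ℓ θ')).sum))
    (U : Θ → ℝ)
    (hU : ∀ θ : Θ, U θ = (1 / (n : ℝ)) * ((Dc.map (ℓ θ)).sum) + ε * sSup ((fun z => ℓ θ z) '' F))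
    (Ustar : ℝ)
    (hUstar : Ustar = (Finset.Icc 1 T).inf' (Finset.nonempty_Icc.2 hT) (fun t => U (θseq t)))
    (M : ℝ)
    (hM : M = sSup {v : ℝ | ∃ Dp' : Multiset Z, Dp'.card = T ∧ (∀ z ∈ Dp', z ∈ F) ∧
        v = sInf {w : ℝ | ∃ θ : Θ, w = (1 / (n : ℝ)) * (((Dc + Dp').map (ℓ θ)).sum)}}) :
    (1 / (n : ℝ)) * (((Dc + Dp).map (ℓ θtil)).sum) ≤ M ∧ M ≤ Ustar := by
  have hn' : (0:ℝ) < n := by exact_mod_cast hn0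
  have hinv : (0:ℝ) ≤ 1 / n := by positivity
  set S : Set ℝ := {v : ℝ | ∃ Dp' : Multiset Z, Dp'.card = T ∧ (∀ z ∈ Dp', z ∈ F) ∧
        v = sInf {w : ℝ | ∃ θ : Θ, w = (1 / (n : ℝ)) * (((Dc + Dp').map (ℓ θ)).sum)}} with hSdef
  -- every element of S is at most U θ for every θ
  have key : ∀ v ∈ S, ∀ θ : Θ, v ≤ U θ := by
    rintro v ⟨Dp', hcard, hmem, rfl⟩ θ
    obtain ⟨z0, hz0F, hz0⟩ := hmax θ
    have hsup : sSup ((fun z => ℓ θ z) '' F) = ℓ θ z0 :=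
      IsGreatest.csSup_eq ⟨⟨z0, hz0F, rfl⟩, by rintro w ⟨z, hzF, rfl⟩; exact hz0 z hzF⟩
    -- boundedness below of the inner set by compactness
    have hg : Continuous fun θ' : Θ => (1 / (n:ℝ)) * (((Dc + Dp').map (ℓ θ')).sum) :=
      continuous_const.mul (cont_msum ℓ hcont _)
    obtain ⟨θ0, -, h0⟩ := isCompact_univ.exists_isMinOn Set.univ_nonempty hg.continuousOn
    have hbdd : BddBelow {w : ℝ | ∃ θ : Θ, w = (1 / (n : ℝ)) * (((Dc + Dp').map (ℓ θ)).sum)} := by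
      refine ⟨(1 / (n:ℝ)) * (((Dc + Dp').map (ℓ θ0)).sum), ?_⟩
      rintro w ⟨θ', rfl⟩
      exact h0 (Set.mem_univ θ')
    have hle : sInf {w : ℝ | ∃ θ : Θ, w = (1 / (n : ℝ)) * (((Dc + Dp').map (ℓ θ)).sum)}
        ≤ (1 / (n:ℝ)) * (((Dc + Dp').map (ℓ θ)).sum) := csInf_le hbdd ⟨θ, rfl⟩
    have hsum : ((Dp'.map (ℓ θ)).sum) ≤ (T:ℝ) * ℓ θ z0 := by
      have h := Multiset.sum_le_card_nsmul (Dp'.map (ℓ θ)) (ℓ θ z0) (by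
        intro x hx
        obtain ⟨z, hzD, rfl⟩ := Multiset.mem_map.1 hx
        exact hz0 z (hmem z hzD))
      rw [Multiset.card_map, hcard] at h
      simpa [nsmul_eq_mul] using h
    have hTdiv : (1 / (n:ℝ)) * (T:ℝ) = ε := by
      rw [hTn]; field_simp
    have : (1 / (n:ℝ)) * (((Dc + Dp').map (ℓ θ)).sum)
        ≤ (1 / (n:ℝ)) * ((Dc.map (ℓ θ)).sum) + ε * ℓ θ z0 := by
      rw [Multiset.map_add, Multiset.sum_add, mul_add]
      have : (1 / (n:ℝ)) * ((Dp'.map (ℓ θ)).sum) ≤ (1 / (n:ℝ)) * ((T:ℝ) * ℓ θ z0) :=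
        mul_le_mul_of_nonneg_left hsum hinv
      calc (1 / (n:ℝ)) * ((Dc.map (ℓ θ)).sum) + (1 / (n:ℝ)) * ((Dp'.map (ℓ θ)).sum)
          ≤ (1 / (n:ℝ)) * ((Dc.map (ℓ θ)).sum) + (1 / (n:ℝ)) * ((T:ℝ) * ℓ θ z0) := by linarith
        _ = (1 / (n:ℝ)) * ((Dc.map (ℓ θ)).sum) + ε * ℓ θ z0 := by rw [← mul_assoc, hTdiv]
    rw [hU θ, hsup]
    exact hle.trans this
  -- the candidate value is in S
  have hDpcard : Dp.card = T := by
    rw [hDp, Multiset.card_map]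
    simp [Nat.card_Icc]
  have hDpF : ∀ z ∈ Dp, z ∈ F := by
    intro z hzD
    rw [hDp] at hzD
    obtain ⟨t, ht, rfl⟩ := Multiset.mem_map.1 hzD
    exact (hz t ht).1
  have hval : (1 / (n : ℝ)) * (((Dc + Dp).map (ℓ θtil)).sum)
      = sInf {w : ℝ | ∃ θ : Θ, w = (1 / (n : ℝ)) * (((Dc + Dp).map (ℓ θ)).sum)} := by
    have hb : BddBelow {w : ℝ | ∃ θ : Θ, w = (1 / (n : ℝ)) * (((Dc + Dp).map (ℓ θ)).sum)} :=
      ⟨(1 / (n : ℝ)) * (((Dc + Dp).map (ℓ θtil)).sum), by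
        rintro w ⟨θ', rfl⟩; exact mul_le_mul_of_nonneg_left (hθtil θ') hinv⟩
    refine le_antisymm (le_csInf ⟨_, θtil, rfl⟩ ?_) (csInf_le hb ⟨θtil, rfl⟩)
    rintro w ⟨θ', rfl⟩
    exact mul_le_mul_of_nonneg_left (hθtil θ') hinv
  have hmemS : (1 / (n : ℝ)) * (((Dc + Dp).map (ℓ θtil)).sum) ∈ S :=
    ⟨Dp, hDpcard, hDpF, hval⟩
  have hbddS : BddAbove S := ⟨U (θseq T), fun v hv => key v hv (θseq T)⟩
  constructor
  · rw [hM]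
    exact le_csSup hbddS hmemS
  · rw [hM, hUstar]
    refine csSup_le ⟨_, hmemS⟩ ?_
    intro v hv
    exact Finset.le_inf' _ _ fun t _ => key v hv (θseq t)
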